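/- arXiv:1303.3395 — 3 statements merged into one kernel-verified Lean document; each statement's English description precedes it below -/
import Mathlib

section
/- Let $\alpha > -1$, $q > 1$, and $u \in C^{2,1}(\Omega \times (0,T))$ be a nonnegative classical solution of $\partial_t u - \Delta u + t^\alpha u^q = 0$ in $\Omega \times (0,T)$, where $\Omega \subset \mathbb{R}^N$ is open, such that $u$ is continuous up to the parabolic boundary and vanishes on $\partial\Omega \times [0,T)$. Then $u(x,t) \le c_\alpha t^{-(\alpha+1)/(q-1)}$ for all $(x,t) \in \Omega \times (0,T)$, where $c_\alpha = \left(\frac{\alpha+1}{q-1}\right)^{1/(q-1)}$. -/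
open Set

/-- The Laplacian of `f : ℝ^N → ℝ` as the sum of second derivatives in coordinate directions. -/
noncomputable def lap {N : ℕ} (f : EuclideanSpace ℝ (Fin N) → ℝ)
    (x : EuclideanSpace ℝ (Fin N)) : ℝ :=
  ∑ i : Fin N, iteratedFDeriv ℝ 2 f x ![EuclideanSpace.single i 1, EuclideanSpace.single i 1]

/-!
For `0 < t₁ < t₀` the function `ψ(t) = c_α (t^(α+1) - t₁^(α+1))^(-1/(q-1))` solves
`ψ' = -t^α ψ^q` on `(t₁, ∞)` and blows up at `t₁`, while `U(y) = A (R² - |y - x₀|²)^(-γ)`,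
`γ = 2/(q-1)`, blows up on the sphere `|y - x₀| = R` and satisfies `ΔU ≤ t^α U^q` in the ball
once `A^(q-1)` is large compared to `R²`. As `s ↦ s^q` is superadditive, `ψ + U + εt` is then a
strict supersolution, so `u - ψ - U - εt` cannot attain a positive maximum over
`(closure Ω ∩ B_R(x₀)) × (t₁, t₀]`: it is negative where `u = 0` on `∂Ω` and where a barrier
exceeds the bound of `u` near `t = t₁` or `|y - x₀| = R`, while at an interior maximum the
equation for `u` contradicts the strict supersolution inequality. Hence
`u(x₀, t₀) ≤ ψ(t₀) + U(x₀) + εt₀`; since `U(x₀)` can be made small by taking `R` large, letting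
`ε → 0` and `t₁ → 0` gives the bound.
-/

open Filter Topology Metric
open scoped RealInnerProductSpace

theorem IsLocalMax.deriv_deriv_nonpos {f : ℝ → ℝ} {x₀ : ℝ} (h : IsLocalMax f x₀)
    (hc : ContinuousAt f x₀) : deriv (deriv f) x₀ ≤ 0 := by
  by_contra! hpos
  have hconst : f =ᶠ[𝓝 x₀] fun _ => f x₀ :=
    (h.and (isLocalMin_of_deriv_deriv_pos hpos h.deriv_eq_zero hc)).mono
      fun _ hx => le_antisymm hx.1 hx.2
  have hderiv : deriv f =ᶠ[𝓝 x₀] fun _ => 0 :=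
    hconst.eventuallyEq_nhds.mono fun _ hx => hx.deriv_eq.trans (deriv_const _ _)
  simp [hderiv.deriv_eq] at hpos

theorem deriv_nonneg_of_isMaxOn_Icc {f : ℝ → ℝ} {a t D : ℝ} (hat : a < t)
    (hmax : IsMaxOn f (Icc a t) t) (hf : HasDerivAt f D t) : 0 ≤ D := by
  have hcone : a - t ∈ posTangentConeAt (Icc a t) t :=
    sub_mem_posTangentConeAt_of_segment_subset ((segment_symm ℝ t a).trans_subset
      (segment_subset_Icc hat.le))
  have := hmax.localize.hasFDerivWithinAt_nonpos hf.hasFDerivAt.hasFDerivWithinAt hcone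
  simp only [ContinuousLinearMap.toSpanSingleton_apply, smul_eq_mul] at this
  exact nonneg_of_mul_nonpos_right this (sub_neg.2 hat)

section SecondDerivative

variable {E F : Type*} [NormedAddCommGroup E] [NormedSpace ℝ E] [NormedAddCommGroup F]
  [NormedSpace ℝ F]

theorem iteratedFDeriv_two_self_eq_deriv_deriv {f : E → F} {x : E} (hf : ContDiffAt ℝ 2 f x)
    (v : E) : iteratedFDeriv ℝ 2 f x ![v, v] = deriv (deriv fun r : ℝ => f (x + r • v)) 0 := by
  have hline : ∀ r : ℝ, HasDerivAt (fun r : ℝ => x + r • v) v r := fun r => by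
    simpa using ((hasDerivAt_id r).smul_const v).const_add x
  have hderiv : deriv (fun r : ℝ => f (x + r • v)) =ᶠ[𝓝 0] fun r => fderiv ℝ f (x + r • v) v := by
    have hmap : Tendsto (fun r : ℝ => x + r • v) (𝓝 0) (𝓝 x) := by
      simpa using (hline 0).continuousAt.tendsto
    filter_upwards [hmap.eventually (hf.eventually (by norm_num))] with r hr
    exact ((hr.differentiableAt two_ne_zero).hasFDerivAt.comp_hasDerivAt r (hline r)).deriv
  have hdf : DifferentiableAt ℝ (fderiv ℝ f) x :=
    (hf.fderiv_right le_rfl).differentiableAt one_ne_zero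
  have h0 : HasDerivAt (fun r : ℝ => fderiv ℝ f (x + r • v)) (fderiv ℝ (fderiv ℝ f) x v) 0 :=
    hdf.hasFDerivAt.comp_hasDerivAt_of_eq 0 (hline 0) (by simp)
  rw [hderiv.deriv_eq, (h0.clm_apply (hasDerivAt_const 0 v)).deriv, iteratedFDeriv_two_apply]
  simp

theorem IsLocalMax.iteratedFDeriv_two_self_nonpos {f : E → ℝ} {x : E} (h : IsLocalMax f x)
    (hf : ContDiffAt ℝ 2 f x) (v : E) : iteratedFDeriv ℝ 2 f x ![v, v] ≤ 0 := by
  have hline : ContinuousAt (fun r : ℝ => x + r • v) 0 := by fun_prop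
  rw [iteratedFDeriv_two_self_eq_deriv_deriv hf]
  exact (IsLocalMax.comp_continuous (by simpa using h) hline).deriv_deriv_nonpos
    (hf.continuousAt.comp_of_eq hline (by simp))

theorem iteratedFDeriv_two_self_eq_of_hasDerivAt {f : E → F} {x v : E} {f' : ℝ → F} {d : F}
    (hf : ContDiffAt ℝ 2 f x)
    (hf' : ∀ᶠ r in 𝓝 (0 : ℝ), HasDerivAt (fun r : ℝ => f (x + r • v)) (f' r) r)
    (hd : HasDerivAt f' d 0) : iteratedFDeriv ℝ 2 f x ![v, v] = d := by
  have hderiv : deriv (fun r : ℝ => f (x + r • v)) =ᶠ[𝓝 0] f' := hf'.mono fun _ hr => hr.deriv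
  rw [iteratedFDeriv_two_self_eq_deriv_deriv hf, hderiv.deriv_eq, hd.deriv]

end SecondDerivative

theorem lap_le_of_isLocalMax_sub {N : ℕ} {f g : EuclideanSpace ℝ (Fin N) → ℝ}
    {x : EuclideanSpace ℝ (Fin N)} (h : IsLocalMax (fun y => f y - g y) x)
    (hf : ContDiffAt ℝ 2 f x) (hg : ContDiffAt ℝ 2 g x) : lap f x ≤ lap g x := by
  refine Finset.sum_le_sum fun i _ => sub_nonpos.1 ?_
  rw [← sub_apply, ← iteratedFDeriv_sub_apply hf hg]
  exact h.iteratedFDeriv_two_self_nonpos (hf.sub hg) _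

theorem iteratedFDeriv_two_radial {E : Type*} [NormedAddCommGroup E] [InnerProductSpace ℝ E]
    {φ φ' : ℝ → ℝ} {φ'' : ℝ} {x₀ y : E} (hφ : ContDiffAt ℝ 2 φ (‖y - x₀‖ ^ 2))
    (hφ' : ∀ᶠ s in 𝓝 (‖y - x₀‖ ^ 2), HasDerivAt φ (φ' s) s)
    (hφ'' : HasDerivAt φ' φ'' (‖y - x₀‖ ^ 2)) (v : E) :
    iteratedFDeriv ℝ 2 (fun z => φ (‖z - x₀‖ ^ 2)) y ![v, v] =
      2 * ‖v‖ ^ 2 * φ' (‖y - x₀‖ ^ 2) + 4 * ⟪y - x₀, v⟫ ^ 2 * φ'' := by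
  have hline : ∀ r : ℝ, HasDerivAt (fun r : ℝ => y + r • v - x₀) v r := fun r => by
    simpa using (((hasDerivAt_id r).smul_const v).const_add y).sub_const x₀
  have hg : ∀ r : ℝ, HasDerivAt (fun r : ℝ => ‖y + r • v - x₀‖ ^ 2)
      (2 * ⟪y + r • v - x₀, v⟫) r := fun r => (hline r).norm_sq
  have hg' : HasDerivAt (fun r : ℝ => 2 * ⟪y + r • v - x₀, v⟫) (2 * ‖v‖ ^ 2) 0 := by
    simpa [real_inner_self_eq_norm_sq] using ((hline 0).inner ℝ (hasDerivAt_const 0 v)).const_mul 2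
  have hg0 : ‖y + (0 : ℝ) • v - x₀‖ ^ 2 = ‖y - x₀‖ ^ 2 := by simp
  refine iteratedFDeriv_two_self_eq_of_hasDerivAt (f' := fun r => φ' (‖y + r • v - x₀‖ ^ 2) *
    (2 * ⟪y + r • v - x₀, v⟫)) ?_ ?_ ?_
  · exact hφ.comp y ((contDiff_norm_sq ℝ).contDiffAt.comp y (contDiffAt_id.sub contDiffAt_const))
  · have hcont : Tendsto (fun r : ℝ => ‖y + r • v - x₀‖ ^ 2) (𝓝 0) (𝓝 (‖y - x₀‖ ^ 2)) := by
      simpa using (hg 0).continuousAt.tendsto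
    filter_upwards [hcont.eventually hφ'] with r hr
    exact hr.comp r (hg r)
  · refine ((hφ''.comp_of_eq 0 (hg 0) hg0.symm).mul hg').congr_deriv ?_
    simp only [Function.comp_apply, zero_smul, add_zero]
    ring

theorem lap_radial {N : ℕ} {φ φ' : ℝ → ℝ} {φ'' : ℝ} {x₀ y : EuclideanSpace ℝ (Fin N)}
    (hφ : ContDiffAt ℝ 2 φ (‖y - x₀‖ ^ 2))
    (hφ' : ∀ᶠ s in 𝓝 (‖y - x₀‖ ^ 2), HasDerivAt φ (φ' s) s)
    (hφ'' : HasDerivAt φ' φ'' (‖y - x₀‖ ^ 2)) :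
    lap (fun z => φ (‖z - x₀‖ ^ 2)) y = 2 * N * φ' (‖y - x₀‖ ^ 2) + 4 * ‖y - x₀‖ ^ 2 * φ'' := by
  simp only [lap, iteratedFDeriv_two_radial hφ hφ' hφ'', EuclideanSpace.inner_single_right,
    PiLp.norm_single, EuclideanSpace.norm_sq_eq (y - x₀), Finset.sum_add_distrib, ← Finset.sum_mul]
  simp [Finset.mul_sum, mul_comm]

theorem hasDerivAt_sub_rpow {a p s : ℝ} (hs : s < a) :
    HasDerivAt (fun s => (a - s) ^ p) (-(p * (a - s) ^ (p - 1))) s := by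
  simpa using ((hasDerivAt_id s).const_sub a).rpow_const (p := p) (Or.inl (sub_pos.2 hs).ne')

noncomputable def ballBarrier {E : Type*} [NormedAddCommGroup E] (γ A R : ℝ) (x₀ y : E) : ℝ :=
  A * (R ^ 2 - ‖y - x₀‖ ^ 2) ^ (-γ)

section ballBarrier

variable {E : Type*} [NormedAddCommGroup E] {γ A R : ℝ} {x₀ y : E}

theorem sq_sub_norm_sq_pos (hy : ‖y - x₀‖ < R) : 0 < R ^ 2 - ‖y - x₀‖ ^ 2 :=
  sub_pos.2 (pow_lt_pow_left₀ hy (norm_nonneg _) two_ne_zero)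

theorem ballBarrier_pos (hA : 0 < A) (hy : ‖y - x₀‖ < R) : 0 < ballBarrier γ A R x₀ y :=
  mul_pos hA (Real.rpow_pos_of_pos (sq_sub_norm_sq_pos hy) _)

theorem tendsto_ballBarrier_sphere_atTop (hA : 0 < A) (hγ : 0 < γ) (hR : 0 < R) :
    Tendsto (fun ρ : ℝ => A * (R ^ 2 - ρ ^ 2) ^ (-γ)) (𝓝[<] R) atTop := by
  have hbase : Tendsto (fun ρ : ℝ => R ^ 2 - ρ ^ 2) (𝓝[<] R) (𝓝[>] 0) := by
    refine tendsto_nhdsWithin_iff.2 ⟨?_, ?_⟩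
    · have h : Tendsto (fun ρ : ℝ => R ^ 2 - ρ ^ 2) (𝓝 R) (𝓝 (R ^ 2 - R ^ 2)) :=
        (continuous_const.sub (continuous_pow 2)).tendsto R
      rw [sub_self] at h
      exact h.mono_left nhdsWithin_le_nhds
    · filter_upwards [Ioo_mem_nhdsLT (neg_lt_self hR)] with ρ hρ
      exact sub_pos.2 (sq_lt_sq' hρ.1 hρ.2)
  exact ((tendsto_rpow_neg_nhdsGT_zero (neg_lt_zero.2 hγ)).comp hbase).const_mul_atTop hA

variable [InnerProductSpace ℝ E]

theorem contDiffAt_ballBarrier {n : WithTop ℕ∞} (hy : ‖y - x₀‖ < R) :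
    ContDiffAt ℝ n (ballBarrier γ A R x₀) y :=
  contDiffAt_const.mul ((contDiffAt_const.sub ((contDiff_norm_sq ℝ).contDiffAt.comp y
    (contDiffAt_id.sub contDiffAt_const))).rpow_const_of_ne (sq_sub_norm_sq_pos hy).ne')

theorem continuousOn_ballBarrier : ContinuousOn (ballBarrier γ A R x₀) (ball x₀ R) := fun _ hy =>
  (contDiffAt_ballBarrier (n := 0) (mem_ball_iff_norm.1 hy)).continuousAt.continuousWithinAt

end ballBarrier

section ballBarrierLaplacian

variable {N : ℕ} {γ A R : ℝ} {x₀ y : EuclideanSpace ℝ (Fin N)}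

theorem lap_ballBarrier (hy : ‖y - x₀‖ < R) :
    lap (ballBarrier γ A R x₀) y = A * γ * (2 * N * (R ^ 2 - ‖y - x₀‖ ^ 2) ^ (-γ - 1)
      + 4 * (γ + 1) * ‖y - x₀‖ ^ 2 * (R ^ 2 - ‖y - x₀‖ ^ 2) ^ (-γ - 2)) := by
  have hs : ‖y - x₀‖ ^ 2 < R ^ 2 := sub_pos.1 (sq_sub_norm_sq_pos hy)
  have hφ : ∀ s < R ^ 2, HasDerivAt (fun s => A * (R ^ 2 - s) ^ (-γ))
      (A * γ * (R ^ 2 - s) ^ (-γ - 1)) s := fun s hs =>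
    ((hasDerivAt_sub_rpow hs).const_mul A).congr_deriv (by ring)
  have hφ' : HasDerivAt (fun s => A * γ * (R ^ 2 - s) ^ (-γ - 1))
      (A * γ * (γ + 1) * (R ^ 2 - ‖y - x₀‖ ^ 2) ^ (-γ - 2)) (‖y - x₀‖ ^ 2) :=
    ((hasDerivAt_sub_rpow hs).const_mul (A * γ)).congr_deriv (by ring_nf)
  have hφC : ContDiffAt ℝ 2 (fun s => A * (R ^ 2 - s) ^ (-γ)) (‖y - x₀‖ ^ 2) :=
    contDiffAt_const.mul ((contDiffAt_const.sub contDiffAt_id).rpow_const_of_ne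
      (sub_pos.2 hs).ne')
  refine (lap_radial hφC ((eventually_lt_nhds hs).mono hφ) hφ').trans ?_
  ring

theorem lap_ballBarrier_le {q m : ℝ} (hq : 1 < q) (hγ : γ * (q - 1) = 2) (hA : 0 < A)
    (hy : ‖y - x₀‖ < R) (hAm : (2 * N * γ + 4 * γ * (γ + 1)) * R ^ 2 ≤ m * A ^ (q - 1)) :
    lap (ballBarrier γ A R x₀) y ≤ m * ballBarrier γ A R x₀ y ^ q := by
  set c := R ^ 2 - ‖y - x₀‖ ^ 2
  have hc : 0 < c := sq_sub_norm_sq_pos hy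
  have hγ₀ : 0 ≤ γ := nonneg_of_mul_nonneg_left (hγ.symm ▸ zero_le_two) (by linarith)
  have hcR : c ≤ R ^ 2 := sub_le_self _ (by positivity)
  have hyR : ‖y - x₀‖ ^ 2 ≤ R ^ 2 := by linarith
  have hpow : ballBarrier γ A R x₀ y ^ q = A ^ (q - 1) * A * c ^ (-γ - 2) := by
    rw [ballBarrier, Real.mul_rpow hA.le (Real.rpow_nonneg hc.le _), ← Real.rpow_mul hc.le,
      ← Real.rpow_add_one hA.ne', sub_add_cancel]
    congr 2
    linear_combination -hγ
  have hc₁ : c ^ (-γ - 1) = c * c ^ (-γ - 2) := by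
    rw [← Real.rpow_one_add' hc.le (by linarith)]
    ring_nf
  calc lap (ballBarrier γ A R x₀) y
      = A * c ^ (-γ - 2) * (2 * N * γ * c + 4 * γ * (γ + 1) * ‖y - x₀‖ ^ 2) := by
        rw [lap_ballBarrier hy, hc₁]; ring
    _ ≤ A * c ^ (-γ - 2) * ((2 * N * γ + 4 * γ * (γ + 1)) * R ^ 2) := by
        refine mul_le_mul_of_nonneg_left ?_ (by positivity)
        have := mul_le_mul_of_nonneg_left hcR (by positivity : (0 : ℝ) ≤ 2 * N * γ)
        have := mul_le_mul_of_nonneg_left hyR (by positivity : 0 ≤ 4 * γ * (γ + 1))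
        linarith
    _ ≤ A * c ^ (-γ - 2) * (m * A ^ (q - 1)) := by gcongr
    _ = m * ballBarrier γ A R x₀ y ^ q := by rw [hpow]; ring

end ballBarrierLaplacian

noncomputable def timeBarrier (α q t₁ t : ℝ) : ℝ :=
  ((α + 1) / (q - 1)) ^ (1 / (q - 1)) * (t ^ (α + 1) - t₁ ^ (α + 1)) ^ (-(1 / (q - 1)))

section timeBarrier

variable {α q t₁ t : ℝ}

theorem rpow_sub_rpow_pos (hα : -1 < α) (ht₁ : 0 ≤ t₁) (ht : t₁ < t) :
    0 < t ^ (α + 1) - t₁ ^ (α + 1) :=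
  sub_pos.2 (Real.rpow_lt_rpow ht₁ ht (by linarith))

theorem timeBarrier_pos (hα : -1 < α) (hq : 1 < q) (ht₁ : 0 ≤ t₁) (ht : t₁ < t) :
    0 < timeBarrier α q t₁ t := by
  have := rpow_sub_rpow_pos hα ht₁ ht
  have : 0 < (α + 1) / (q - 1) := div_pos (by linarith) (by linarith)
  unfold timeBarrier
  positivity

theorem hasDerivAt_timeBarrier (hα : -1 < α) (hq : 1 < q) (ht₁ : 0 ≤ t₁) (ht : t₁ < t) :
    HasDerivAt (timeBarrier α q t₁) (-(t ^ α * timeBarrier α q t₁ t ^ q)) t := by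
  set g := 1 / (q - 1)
  set c := ((α + 1) / (q - 1)) ^ g
  set D := t ^ (α + 1) - t₁ ^ (α + 1)
  have hD : 0 < D := rpow_sub_rpow_pos hα ht₁ ht
  have hq' : q - 1 ≠ 0 := by linarith
  have hX : 0 < (α + 1) / (q - 1) := div_pos (by linarith) (by linarith)
  have hc : 0 < c := Real.rpow_pos_of_pos hX g
  have hcq : c ^ q = (α + 1) * g * c := by
    rw [show q = (q - 1) + 1 by ring, Real.rpow_add_one hc.ne', ← Real.rpow_mul hX.le,
      one_div_mul_cancel hq', Real.rpow_one, div_eq_mul_one_div]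
  have hDq : (D ^ (-g)) ^ q = D ^ (-g - 1) := by
    rw [← Real.rpow_mul hD.le]
    congr 1
    linear_combination -one_div_mul_cancel hq'
  have hD' : HasDerivAt (fun s => s ^ (α + 1) - t₁ ^ (α + 1)) ((α + 1) * t ^ α) t := by
    simpa using
      (Real.hasDerivAt_rpow_const (p := α + 1) (Or.inl (by linarith))).sub_const (t₁ ^ (α + 1))
  refine ((hD'.rpow_const (p := -g) (Or.inl hD.ne')).const_mul c).congr_deriv ?_
  rw [timeBarrier, Real.mul_rpow hc.le (Real.rpow_nonneg hD.le _), hcq, hDq]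
  ring

theorem continuousOn_timeBarrier (hα : -1 < α) (hq : 1 < q) (ht₁ : 0 ≤ t₁) :
    ContinuousOn (timeBarrier α q t₁) (Ioi t₁) := fun _ ht =>
  (hasDerivAt_timeBarrier hα hq ht₁ ht).continuousAt.continuousWithinAt

theorem tendsto_timeBarrier_atTop (hα : -1 < α) (hq : 1 < q) (ht₁ : 0 ≤ t₁) :
    Tendsto (timeBarrier α q t₁) (𝓝[>] t₁) atTop := by
  have hX : 0 < (α + 1) / (q - 1) := div_pos (by linarith) (by linarith)
  have hbase : Tendsto (fun s => s ^ (α + 1) - t₁ ^ (α + 1)) (𝓝[>] t₁) (𝓝[>] 0) := by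
    refine tendsto_nhdsWithin_iff.2 ⟨?_, ?_⟩
    · have h : Tendsto (fun s => s ^ (α + 1) - t₁ ^ (α + 1)) (𝓝 t₁)
          (𝓝 (t₁ ^ (α + 1) - t₁ ^ (α + 1))) :=
        ((Real.continuousAt_rpow_const t₁ (α + 1) (Or.inr (by linarith))).sub
          continuousAt_const).tendsto
      rw [sub_self] at h
      exact h.mono_left nhdsWithin_le_nhds
    · filter_upwards [self_mem_nhdsWithin] with s hs using rpow_sub_rpow_pos hα ht₁ hs
  exact ((tendsto_rpow_neg_nhdsGT_zero (neg_lt_zero.2 (by positivity))).comp hbase).const_mul_atTop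
    (Real.rpow_pos_of_pos hX _)

theorem tendsto_timeBarrier_zero (hα : -1 < α) (ht : 0 < t) :
    Tendsto (fun t₁ => timeBarrier α q t₁ t) (𝓝 0)
      (𝓝 (((α + 1) / (q - 1)) ^ (1 / (q - 1)) * t ^ (-(α + 1) / (q - 1)))) := by
  have hα₁ : α + 1 ≠ 0 := by linarith
  have hcont : ContinuousAt (fun t₁ => timeBarrier α q t₁ t) 0 := by
    refine continuousAt_const.mul ((continuousAt_const.sub
      (Real.continuousAt_rpow_const 0 (α + 1) (Or.inr (by linarith)))).rpow_const (Or.inl ?_))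
    simpa [Real.zero_rpow hα₁] using (Real.rpow_pos_of_pos ht (α + 1)).ne'
  have hval : timeBarrier α q 0 t =
      ((α + 1) / (q - 1)) ^ (1 / (q - 1)) * t ^ (-(α + 1) / (q - 1)) := by
    rw [timeBarrier, Real.zero_rpow hα₁, sub_zero, ← Real.rpow_mul ht.le]
    ring_nf
  exact hval ▸ hcont.tendsto

end timeBarrier

theorem min_rpow_le_rpow_of_mem_Icc {a b t α : ℝ} (ha : 0 < a) (ht : t ∈ Icc a b) :
    min (a ^ α) (b ^ α) ≤ t ^ α := by
  rcases le_total 0 α with hα | hα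
  · exact (min_le_left _ _).trans (Real.rpow_le_rpow ha.le ht.1 hα)
  · exact (min_le_right _ _).trans (Real.rpow_le_rpow_of_nonpos (ha.trans_le ht.1) ht.2 hα)

theorem lt_add_of_isMaxOn_sub {N : ℕ} {α q ε a t : ℝ} {u : EuclideanSpace ℝ (Fin N) → ℝ → ℝ}
    {ψ : ℝ → ℝ} {U : EuclideanSpace ℝ (Fin N) → ℝ} {x : EuclideanSpace ℝ (Fin N)}
    {V : Set (EuclideanSpace ℝ (Fin N))} (hq : 1 ≤ q) (ht : 0 ≤ t) (hat : a < t) (hε : 0 < ε)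
    (hu : DifferentiableAt ℝ (u x) t) (hu₂ : ContDiffAt ℝ 2 (fun y => u y t) x)
    (hsol : deriv (u x) t - lap (fun y => u y t) x + t ^ α * u x t ^ q = 0)
    (hψ : HasDerivAt ψ (-(t ^ α * ψ t ^ q)) t) (hψ₀ : 0 ≤ ψ t)
    (hU : ContDiffAt ℝ 2 U x) (hU₀ : 0 ≤ U x) (hlapU : lap U x ≤ t ^ α * U x ^ q)
    (hV : V ∈ 𝓝 x)
    (hmax : IsMaxOn (fun p => u p.1 p.2 - ψ p.2 - U p.1 - ε * p.2) (V ×ˢ Icc a t) (x, t)) :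
    u x t < ψ t + U x := by
  by_contra! hle
  have hspace : IsLocalMax (fun y => u y t - U y) x := by
    filter_upwards [hV] with y hy
    have := isMaxOn_iff.1 hmax _ (mk_mem_prod hy (right_mem_Icc.2 hat.le))
    linarith
  have htime : IsMaxOn (fun s => u x s - ψ s - ε * s) (Icc a t) t := isMaxOn_iff.2 fun s hs => by
    have := isMaxOn_iff.1 hmax _ (mk_mem_prod (mem_of_mem_nhds hV) hs)
    linarith
  have hdt : 0 ≤ deriv (u x) t + t ^ α * ψ t ^ q - ε :=
    deriv_nonneg_of_isMaxOn_Icc hat htime <|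
      ((hu.hasDerivAt.sub hψ).sub ((hasDerivAt_id t).const_mul ε)).congr_deriv (by ring)
  have hlap : lap (fun y => u y t) x ≤ lap U x := lap_le_of_isLocalMax_sub hspace hu₂ hU
  have hpow : ψ t ^ q + U x ^ q ≤ u x t ^ q :=
    (Real.add_rpow_le_rpow_add hψ₀ hU₀ hq).trans
      (Real.rpow_le_rpow (add_nonneg hψ₀ hU₀) hle (by linarith))
  have := mul_le_mul_of_nonneg_left hpow (Real.rpow_nonneg ht α)
  linarith

theorem exists_isMaxOn_parabolicInterior {E : Type*} [NormedAddCommGroup E] [ProperSpace E]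
    {Ω : Set E} {x₀ : E} {ρ a b : ℝ} {w : E × ℝ → ℝ}
    (hw : ContinuousOn w ((closure Ω ∩ closedBall x₀ ρ) ×ˢ Icc a b)) (hx₀ : x₀ ∈ closure Ω)
    (hρ : 0 ≤ ρ) (hab : a ≤ b) (hpos : 0 < w (x₀, b))
    (hbd : ∀ p ∈ (closure Ω ∩ closedBall x₀ ρ) ×ˢ Icc a b, 0 < w p →
      p.1 ∈ Ω ∧ ‖p.1 - x₀‖ < ρ ∧ a < p.2) :
    ∃ x ∈ Ω ∩ ball x₀ ρ, ∃ t ∈ Ioc a b, 0 < w (x, t) ∧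
      IsMaxOn w ((Ω ∩ ball x₀ ρ) ×ˢ Icc a t) (x, t) := by
  have hx₀K : (x₀, b) ∈ (closure Ω ∩ closedBall x₀ ρ) ×ˢ Icc a b :=
    ⟨⟨hx₀, mem_closedBall_self hρ⟩, hab, le_rfl⟩
  obtain ⟨⟨x, t⟩, hK, hmax⟩ :=
    (((isCompact_closedBall x₀ ρ).inter_left isClosed_closure).prod isCompact_Icc).exists_isMaxOn
      ⟨_, hx₀K⟩ hw
  have hwpos : 0 < w (x, t) := hpos.trans_le (hmax hx₀K)
  obtain ⟨hxΩ, hxρ, hat⟩ := hbd _ hK hwpos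
  refine ⟨x, ⟨hxΩ, mem_ball_iff_norm.2 hxρ⟩, t, ⟨hat, hK.2.2⟩, hwpos, hmax.on_subset ?_⟩
  exact prod_mono (fun y hy => ⟨subset_closure hy.1, ball_subset_closedBall hy.2⟩)
    (Icc_subset_Icc_right hK.2.2)

theorem lt_timeBarrier_add_ballBarrier_of_isMaxOn {N : ℕ} {α q γ ε A R m t₁ a t : ℝ}
    (hα : -1 < α) (hq : 1 < q) (hγ : γ * (q - 1) = 2) {u : EuclideanSpace ℝ (Fin N) → ℝ → ℝ}
    {x x₀ : EuclideanSpace ℝ (Fin N)} {V : Set (EuclideanSpace ℝ (Fin N))} (ht₁ : 0 ≤ t₁)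
    (ht₁a : t₁ < a) (hat : a < t) (hε : 0 < ε) (hA : 0 < A) (hxR : ‖x - x₀‖ < R) (hmt : m ≤ t ^ α)
    (hAm : (2 * N * γ + 4 * γ * (γ + 1)) * R ^ 2 ≤ m * A ^ (q - 1))
    (hu : DifferentiableAt ℝ (u x) t) (hu₂ : ContDiffAt ℝ 2 (fun y => u y t) x)
    (hsol : deriv (u x) t - lap (fun y => u y t) x + t ^ α * u x t ^ q = 0) (hV : V ∈ 𝓝 x)
    (hmax : IsMaxOn (fun p => u p.1 p.2 - timeBarrier α q t₁ p.2 - ballBarrier γ A R x₀ p.1 -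
      ε * p.2) (V ×ˢ Icc a t) (x, t)) :
    u x t < timeBarrier α q t₁ t + ballBarrier γ A R x₀ x := by
  have ht₁t : t₁ < t := ht₁a.trans hat
  have hU : 0 < ballBarrier γ A R x₀ x := ballBarrier_pos hA hxR
  have hlapU : lap (ballBarrier γ A R x₀) x ≤ t ^ α * ballBarrier γ A R x₀ x ^ q :=
    (lap_ballBarrier_le hq hγ hA hxR hAm).trans
      (mul_le_mul_of_nonneg_right hmt (Real.rpow_nonneg hU.le q))
  exact lt_add_of_isMaxOn_sub hq.le (ht₁.trans ht₁t.le) hat hε hu hu₂ hsol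
    (hasDerivAt_timeBarrier hα hq ht₁ ht₁t) (timeBarrier_pos hα hq ht₁ ht₁t).le
    (contDiffAt_ballBarrier hxR) hU.le hlapU hV hmax

theorem le_timeBarrier_add_ballBarrier {N : ℕ} {α q T γ : ℝ} (hα : -1 < α) (hq : 1 < q)
    (hγ : γ * (q - 1) = 2) {Ω : Set (EuclideanSpace ℝ (Fin N))} (hΩ : IsOpen Ω)
    {u : EuclideanSpace ℝ (Fin N) → ℝ → ℝ}
    (hcont : ContinuousOn (fun p : EuclideanSpace ℝ (Fin N) × ℝ => u p.1 p.2)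
      (closure Ω ×ˢ Ico 0 T))
    (hsmooth : ∀ x ∈ Ω, ∀ t ∈ Ioo (0 : ℝ) T,
      DifferentiableAt ℝ (u x) t ∧ ContDiffAt ℝ 2 (fun y => u y t) x)
    (hsol : ∀ x ∈ Ω, ∀ t ∈ Ioo (0 : ℝ) T,
      deriv (u x) t - lap (fun y => u y t) x + t ^ α * u x t ^ q = 0)
    (hbdry : ∀ x ∈ frontier Ω, ∀ t ∈ Ico (0 : ℝ) T, u x t = 0)
    {x₀ : EuclideanSpace ℝ (Fin N)} (hx₀ : x₀ ∈ Ω) {t₁ t₀ ε A R m : ℝ} (ht₁ : 0 < t₁)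
    (ht₁₀ : t₁ < t₀) (ht₀ : t₀ < T) (hε : 0 < ε) (hA : 0 < A) (hR : 0 < R)
    (hm : ∀ t ∈ Icc t₁ t₀, m ≤ t ^ α)
    (hAm : (2 * N * γ + 4 * γ * (γ + 1)) * R ^ 2 ≤ m * A ^ (q - 1)) :
    u x₀ t₀ ≤ timeBarrier α q t₁ t₀ + ballBarrier γ A R x₀ x₀ + ε * t₀ := by
  by_contra! hlt
  have hγ₀ : 0 < γ := pos_of_mul_pos_left (hγ ▸ two_pos) (by linarith)
  obtain ⟨M, hM⟩ :
      BddAbove ((fun p => u p.1 p.2) '' ((closure Ω ∩ closedBall x₀ R) ×ˢ Icc t₁ t₀)) :=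
    (((isCompact_closedBall x₀ R).inter_left isClosed_closure).prod isCompact_Icc).bddAbove_image
      (hcont.mono (prod_mono inter_subset_left (Icc_subset_Ico ht₁.le ht₀)))
  obtain ⟨ρ, hρM, hρ⟩ := (((tendsto_ballBarrier_sphere_atTop hA hγ₀ hR).eventually_gt_atTop M).and
    (Ioo_mem_nhdsLT hR)).exists
  obtain ⟨t', ht'M, ht'⟩ := (((tendsto_timeBarrier_atTop hα hq ht₁.le).eventually_gt_atTop M).and
    (Ioo_mem_nhdsGT ht₁₀)).exists
  set ψ := timeBarrier α q t₁
  set U := ballBarrier γ A R x₀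
  have hwcont : ContinuousOn (fun p => u p.1 p.2 - ψ p.2 - U p.1 - ε * p.2)
      ((closure Ω ∩ closedBall x₀ ρ) ×ˢ Icc t' t₀) :=
    (((hcont.mono (prod_mono inter_subset_left (Icc_subset_Ico (ht₁.le.trans ht'.1.le) ht₀))).sub
      ((continuousOn_timeBarrier hα hq ht₁.le).comp continuousOn_snd
        fun p hp => ht'.1.trans_le hp.2.1)).sub
      (continuousOn_ballBarrier.comp continuousOn_fst
        fun p hp => closedBall_subset_ball hρ.2 hp.1.2)).sub
      (continuousOn_const.mul continuousOn_snd)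
  have hbd : ∀ p ∈ (closure Ω ∩ closedBall x₀ ρ) ×ˢ Icc t' t₀,
      0 < u p.1 p.2 - ψ p.2 - U p.1 - ε * p.2 → p.1 ∈ Ω ∧ ‖p.1 - x₀‖ < ρ ∧ t' < p.2 := by
    rintro ⟨y, s⟩ ⟨⟨hy, hyρ⟩, hs⟩ hw
    have hs₁ : t₁ < s := ht'.1.trans_le hs.1
    have hyR : ‖y - x₀‖ < R := (mem_closedBall_iff_norm.1 hyρ).trans_lt hρ.2
    have hψ : 0 < ψ s := timeBarrier_pos hα hq ht₁.le hs₁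
    have hU : 0 < U y := ballBarrier_pos hA hyR
    have hεs : 0 < ε * s := mul_pos hε (ht₁.trans hs₁)
    have huM : u y s ≤ M := hM ⟨(y, s), ⟨⟨hy, closedBall_subset_closedBall hρ.2.le hyρ⟩,
      ht'.1.le.trans hs.1, hs.2⟩, rfl⟩
    refine ⟨?_, (mem_closedBall_iff_norm.1 hyρ).lt_of_ne fun h => ?_, hs.1.lt_of_ne fun h => ?_⟩
    · by_contra hyΩ
      have := hbdry y ⟨hy, by rwa [hΩ.interior_eq]⟩ s ⟨ht₁.le.trans hs₁.le, hs.2.trans_lt ht₀⟩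
      linarith
    · have : U y = A * (R ^ 2 - ρ ^ 2) ^ (-γ) := by rw [← h]; rfl
      linarith
    · obtain rfl : t' = s := h
      linarith
  obtain ⟨xb, ⟨hxbΩ, hxbρ⟩, tb, htb, hwb, hmax⟩ := exists_isMaxOn_parabolicInterior hwcont
    (subset_closure hx₀) hρ.1.le ht'.2.le (by linarith) hbd
  have htbT : tb ∈ Ioo 0 T := ⟨ht₁.trans (ht'.1.trans htb.1), htb.2.trans_lt ht₀⟩
  have := lt_timeBarrier_add_ballBarrier_of_isMaxOn hα hq hγ ht₁.le ht'.1 htb.1 hε hA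
    ((mem_ball_iff_norm.1 hxbρ).trans hρ.2) (hm tb ⟨(ht'.1.trans htb.1).le, htb.2⟩) hAm
    (hsmooth xb hxbΩ tb htbT).1 (hsmooth xb hxbΩ tb htbT).2 (hsol xb hxbΩ tb htbT)
    ((hΩ.inter isOpen_ball).mem_nhds ⟨hxbΩ, hxbρ⟩) hmax
  have := mul_pos hε htbT.1
  linarith

theorem exists_ballBarrier_le {E : Type*} [NormedAddCommGroup E] {q γ C m δ : ℝ}
    (hγ : γ * (q - 1) = 2) (hm : 0 < m) (hδ : 0 < δ) (x₀ : E) :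
    ∃ A R, 0 < A ∧ 0 < R ∧ C * R ^ 2 ≤ m * A ^ (q - 1) ∧ ballBarrier γ A R x₀ x₀ ≤ δ := by
  set R := max 1 (C / (m * δ ^ (q - 1)))
  have hR : 1 ≤ R := le_max_left _ _
  have hδq : 0 < δ ^ (q - 1) := Real.rpow_pos_of_pos hδ _
  have hR2 : 0 < R ^ 2 := by positivity
  -- `A = δ R^(2γ)` gives `U(x₀) = δ` and `A^(q-1) = δ^(q-1) R⁴`
  refine ⟨δ * (R ^ 2) ^ γ, R, by positivity, by positivity, ?_, ?_⟩
  · have hApow : (δ * (R ^ 2) ^ γ) ^ (q - 1) = δ ^ (q - 1) * R ^ 2 * R ^ 2 := by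
      rw [Real.mul_rpow hδ.le (by positivity), ← Real.rpow_mul hR2.le, hγ]
      norm_cast
      ring
    have hC : C ≤ m * δ ^ (q - 1) * R := by
      rw [← div_le_iff₀' (by positivity)]
      exact le_max_right _ _
    have hC' : C ≤ m * δ ^ (q - 1) * R ^ 2 :=
      hC.trans (mul_le_mul_of_nonneg_left (le_self_pow₀ hR two_ne_zero) (by positivity))
    calc C * R ^ 2 ≤ m * δ ^ (q - 1) * R ^ 2 * R ^ 2 := mul_le_mul_of_nonneg_right hC' hR2.le
      _ = m * (δ * (R ^ 2) ^ γ) ^ (q - 1) := by rw [hApow]; ring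
  · rw [ballBarrier, sub_self, norm_zero, zero_pow two_ne_zero, sub_zero, mul_assoc,
      ← Real.rpow_add hR2, add_neg_cancel, Real.rpow_zero, mul_one]

theorem le_timeBarrier {N : ℕ} {α q T : ℝ} (hα : -1 < α) (hq : 1 < q)
    {Ω : Set (EuclideanSpace ℝ (Fin N))} (hΩ : IsOpen Ω)
    {u : EuclideanSpace ℝ (Fin N) → ℝ → ℝ}
    (hcont : ContinuousOn (fun p : EuclideanSpace ℝ (Fin N) × ℝ => u p.1 p.2)
      (closure Ω ×ˢ Ico 0 T))
    (hsmooth : ∀ x ∈ Ω, ∀ t ∈ Ioo (0 : ℝ) T,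
      DifferentiableAt ℝ (u x) t ∧ ContDiffAt ℝ 2 (fun y => u y t) x)
    (hsol : ∀ x ∈ Ω, ∀ t ∈ Ioo (0 : ℝ) T,
      deriv (u x) t - lap (fun y => u y t) x + t ^ α * u x t ^ q = 0)
    (hbdry : ∀ x ∈ frontier Ω, ∀ t ∈ Ico (0 : ℝ) T, u x t = 0)
    {x₀ : EuclideanSpace ℝ (Fin N)} (hx₀ : x₀ ∈ Ω) {t₁ t₀ : ℝ} (ht₁ : 0 < t₁)
    (ht₁₀ : t₁ < t₀) (ht₀ : t₀ < T) :
    u x₀ t₀ ≤ timeBarrier α q t₁ t₀ := by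
  have hγ : 2 / (q - 1) * (q - 1) = 2 := div_mul_cancel₀ _ (by linarith)
  have hm : 0 < min (t₁ ^ α) (t₀ ^ α) :=
    lt_min (Real.rpow_pos_of_pos ht₁ α) (Real.rpow_pos_of_pos (ht₁.trans ht₁₀) α)
  refine le_of_forall_pos_le_add fun δ hδ => ?_
  obtain ⟨A, R, hA, hR, hAm, hU⟩ := exists_ballBarrier_le hγ hm (half_pos hδ) x₀
  have := le_timeBarrier_add_ballBarrier hα hq hγ hΩ hcont hsmooth hsol hbdry hx₀ ht₁ ht₁₀ ht₀
    (div_pos (half_pos hδ) (ht₁.trans ht₁₀)) hA hR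
    (fun t ht => min_rpow_le_rpow_of_mem_Icc ht₁ ht) hAm
  rw [div_mul_cancel₀ _ (ht₁.trans ht₁₀).ne'] at this
  linarith

theorem universal_upper_bound_general
    (N : ℕ) (α q T : ℝ) (hα : -1 < α) (hq : 1 < q)
    (Ω : Set (EuclideanSpace ℝ (Fin N))) (hΩ : IsOpen Ω)
    (u : EuclideanSpace ℝ (Fin N) → ℝ → ℝ)
    (hcont : ContinuousOn (fun p : EuclideanSpace ℝ (Fin N) × ℝ => u p.1 p.2)
      (closure Ω ×ˢ Set.Ico 0 T))
    (hsmooth : ∀ x ∈ Ω, ∀ t ∈ Set.Ioo (0 : ℝ) T,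
      DifferentiableAt ℝ (u x) t ∧ ContDiffAt ℝ 2 (fun y => u y t) x)
    (hsol : ∀ x ∈ Ω, ∀ t ∈ Set.Ioo (0 : ℝ) T,
      deriv (u x) t - lap (fun y => u y t) x + t ^ α * u x t ^ q = 0)
    (hbdry : ∀ x ∈ frontier Ω, ∀ t ∈ Set.Ico (0 : ℝ) T, u x t = 0) :
    ∀ x ∈ Ω, ∀ t ∈ Set.Ioo (0 : ℝ) T,
      u x t ≤ ((α + 1) / (q - 1)) ^ (1 / (q - 1)) * t ^ (-(α + 1) / (q - 1)) := by
  intro x₀ hx₀ t₀ ht₀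
  refine ge_of_tendsto
    ((tendsto_timeBarrier_zero hα ht₀.1).mono_left (nhdsWithin_le_nhds (s := Ioi 0))) ?_
  filter_upwards [Ioo_mem_nhdsGT ht₀.1] with t₁ ht₁
  exact le_timeBarrier hα hq hΩ hcont hsmooth hsol hbdry hx₀ ht₁.1 ht₁.2 ht₀.2

/-- A nonnegative classical solution of `∂ₜu - Δu + t^α u^q = 0` in `Ω × (0,T)` that is
continuous up to the parabolic boundary and vanishes on `∂Ω × [0,T)` satisfies
`u(x,t) ≤ c_α t^(-(α+1)/(q-1))`. -/
theorem universal_upper_bound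
    (N : ℕ) (α q T : ℝ) (hα : -1 < α) (hq : 1 < q) (hT : 0 < T)
    (Ω : Set (EuclideanSpace ℝ (Fin N))) (hΩ : IsOpen Ω)
    (u : EuclideanSpace ℝ (Fin N) → ℝ → ℝ)
    (hcont : ContinuousOn (fun p : EuclideanSpace ℝ (Fin N) × ℝ => u p.1 p.2)
      (closure Ω ×ˢ Set.Ico 0 T))
    (hnonneg : ∀ x ∈ Ω, ∀ t ∈ Set.Ioo (0 : ℝ) T, 0 ≤ u x t)
    (hsmooth : ∀ x ∈ Ω, ∀ t ∈ Set.Ioo (0 : ℝ) T,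
      DifferentiableAt ℝ (u x) t ∧ ContDiffAt ℝ 2 (fun y => u y t) x)
    (hsol : ∀ x ∈ Ω, ∀ t ∈ Set.Ioo (0 : ℝ) T,
      deriv (u x) t - lap (fun y => u y t) x + t ^ α * u x t ^ q = 0)
    (hbdry : ∀ x ∈ frontier Ω, ∀ t ∈ Set.Ico (0 : ℝ) T, u x t = 0) :
    ∀ x ∈ Ω, ∀ t ∈ Set.Ioo (0 : ℝ) T,
      u x t ≤ ((α + 1) / (q - 1)) ^ (1 / (q - 1)) * t ^ (-(α + 1) / (q - 1)) :=
  universal_upper_bound_general N α q T hα hq Ω hΩ u hcont hsmooth hsol hbdry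
end

section
/- Let $h : [0,\infty) \to [0,\infty)$ be continuous, nondecreasing, with $h(0) \ge 0$, and super-additive, i.e. $h(a+b) \ge h(a) + h(b)$ for all $a, b \ge 0$. If $h$ satisfies the Keller–Osserman condition, i.e. there exists $a \ge 0$ with $\int_a^\infty \frac{ds}{\sqrt{H(s)}} < \infty$ where $H(s) = \int_0^s h(\tau) d\tau$, and $h$ is eventually positive, then $\int_a^\infty \frac{ds}{h(s)} < \infty$ for $a$ large enough. -/
/-!
Super-additivity and monotonicity force linear growth, `c s ≤ h s` for large `s`, while
monotonicity alone gives `H s ≤ s h s`. Together `c H ≤ h²`, so `1 / h ≤ c^{-1/2} / √H` and the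
Keller–Osserman integral dominates `∫ 1 / h`.
-/

open MeasureTheory Set

section Superadditive

variable {f : ℝ → ℝ}

lemma nat_mul_le_of_superadditive (hsuper : ∀ a b : ℝ, 0 ≤ a → 0 ≤ b → f a + f b ≤ f (a + b))
    {x : ℝ} (hx : 0 ≤ x) {n : ℕ} (hn : 1 ≤ n) : n * f x ≤ f (n * x) := by
  induction n, hn using Nat.le_induction with
  | base => simp
  | succ n _ ih =>
    calc ((n + 1 : ℕ) : ℝ) * f x = n * f x + f x := by push_cast; ring
      _ ≤ f (n * x) + f x := by linarith
      _ ≤ f (n * x + x) := hsuper _ _ (by positivity) hx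
      _ = f ((n + 1 : ℕ) * x) := by push_cast; ring_nf

lemma mul_le_of_superadditive (hmono : MonotoneOn f (Ici 0))
    (hsuper : ∀ a b : ℝ, 0 ≤ a → 0 ≤ b → f a + f b ≤ f (a + b))
    {t : ℝ} (ht : 0 < t) (hft : 0 ≤ f t) {s : ℝ} (hs : 2 * t ≤ s) :
    f t / (2 * t) * s ≤ f s := by
  set n := ⌊s / t⌋₊
  have hst : 2 ≤ s / t := (le_div_iff₀ ht).mpr (by linarith)
  have hn : 1 ≤ n := Nat.le_floor (by norm_num; linarith)
  have hnt : n * t ≤ s := (le_div_iff₀ ht).mp (Nat.floor_le (by linarith))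
  -- `s / t < n + 1 ≤ 2 n`
  have hn2 : s / (2 * t) ≤ n := by
    have hlt := Nat.lt_floor_add_one (s / t)
    have : (1 : ℝ) ≤ n := by exact_mod_cast hn
    rw [div_le_iff₀ (by linarith)]
    nlinarith [(div_lt_iff₀ ht).mp hlt]
  calc f t / (2 * t) * s = s / (2 * t) * f t := by ring
    _ ≤ n * f t := mul_le_mul_of_nonneg_right hn2 hft
    _ ≤ f (n * t) := nat_mul_le_of_superadditive hsuper ht.le hn
    _ ≤ f s := hmono (mul_nonneg n.cast_nonneg ht.le) (by simp only [mem_Ici]; linarith) hnt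

end Superadditive

section Monotone

variable {f : ℝ → ℝ} {a b : ℝ}

lemma MonotoneOn.mul_le_intervalIntegral (hf : MonotoneOn f (Icc a b)) (hab : a ≤ b) :
    (b - a) * f a ≤ ∫ x in a..b, f x := by
  have hint : IntervalIntegrable f volume a b :=
    MonotoneOn.intervalIntegrable (by rwa [uIcc_of_le hab])
  simpa using intervalIntegral.integral_mono_on hab intervalIntegrable_const hint
    fun x hx => hf (left_mem_Icc.mpr hab) hx hx.1

lemma MonotoneOn.intervalIntegral_le_mul (hf : MonotoneOn f (Icc a b)) (hab : a ≤ b) :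
    ∫ x in a..b, f x ≤ (b - a) * f b := by
  have hint : IntervalIntegrable f volume a b :=
    MonotoneOn.intervalIntegrable (by rwa [uIcc_of_le hab])
  simpa using intervalIntegral.integral_mono_on hab hint intervalIntegrable_const
    fun x hx => hf hx (right_mem_Icc.mpr hab) hx.2

lemma MonotoneOn.intervalIntegral_pos (hf : MonotoneOn f (Icc a b)) (hfa : 0 ≤ f a)
    {t : ℝ} (hat : a ≤ t) (htb : t < b) (hft : 0 < f t) : 0 < ∫ x in a..b, f x := by
  have hint {u v : ℝ} (hu : a ≤ u) (huv : u ≤ v) (hv : v ≤ b) : IntervalIntegrable f volume u v :=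
    MonotoneOn.intervalIntegrable (by rw [uIcc_of_le huv]; exact hf.mono (Icc_subset_Icc hu hv))
  rw [← intervalIntegral.integral_add_adjacent_intervals (hint le_rfl hat htb.le)
    (hint hat htb.le le_rfl)]
  have := (hf.mono (Icc_subset_Icc le_rfl htb.le)).mul_le_intervalIntegral hat
  have := (hf.mono (Icc_subset_Icc hat le_rfl)).mul_le_intervalIntegral htb.le
  nlinarith [mul_nonneg (sub_nonneg.mpr hat) hfa, mul_pos (sub_pos.mpr htb) hft]

lemma MonotoneOn.mul_intervalIntegral_le_sq (hf : MonotoneOn f (Icc 0 b)) (hb : 0 ≤ b)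
    {c : ℝ} (hc : 0 ≤ c) (hcf : c * b ≤ f b) : c * ∫ x in 0..b, f x ≤ f b ^ 2 := by
  have := mul_le_mul_of_nonneg_left (hf.intervalIntegral_le_mul hb) hc
  nlinarith [mul_nonneg hc hb]

end Monotone

lemma one_div_le_of_mul_le_sq {c x y : ℝ} (hc : 0 < c) (hy : 0 < y) (hx : 0 ≤ x)
    (hxy : c * y ≤ x ^ 2) : 1 / x ≤ (√c)⁻¹ * (1 / √y) := by
  have hsqrt : √(c * y) ≤ x := Real.sqrt_le_iff.mpr ⟨hx, hxy⟩
  calc 1 / x ≤ 1 / √(c * y) := one_div_le_one_div_of_le (by positivity) hsqrt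
    _ = (√c)⁻¹ * (1 / √y) := by rw [Real.sqrt_mul hc.le]; field_simp

lemma integrableOn_one_div_of_mul_le_sq {f G : ℝ → ℝ} {c A : ℝ} (hc : 0 < c)
    (hG : IntegrableOn (fun s => 1 / √(G s)) (Ici A)) (hmono : MonotoneOn f (Ici A))
    (hfpos : ∀ s ∈ Ici A, 0 < f s) (hGpos : ∀ s ∈ Ici A, 0 < G s)
    (hfG : ∀ s ∈ Ici A, c * G s ≤ f s ^ 2) :
    IntegrableOn (fun s => 1 / f s) (Ici A) := by
  have hanti : AntitoneOn (fun s => 1 / f s) (Ici A) := fun x hx y hy hxy =>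
    one_div_le_one_div_of_le (hfpos x hx) (hmono hx hy hxy)
  refine (hG.const_mul (√c)⁻¹).mono'
    (aemeasurable_restrict_of_antitoneOn measurableSet_Ici hanti).aestronglyMeasurable ?_
  refine ae_restrict_of_forall_mem measurableSet_Ici fun s hs => ?_
  rw [Real.norm_of_nonneg (one_div_pos.mpr (hfpos s hs)).le]
  exact one_div_le_of_mul_le_sq hc (hGpos s hs) (hfpos s hs).le (hfG s hs)

theorem keller_osserman_superadditive_general
    (h : ℝ → ℝ)
    (hmono : MonotoneOn h (Set.Ici 0))
    (hnonneg : ∀ s : ℝ, 0 ≤ s → 0 ≤ h s)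
    (hsuper : ∀ a b : ℝ, 0 ≤ a → 0 ≤ b → h a + h b ≤ h (a + b))
    (H : ℝ → ℝ) (hH : ∀ s : ℝ, H s = ∫ τ in (0 : ℝ)..s, h τ)
    (hKO : ∃ a : ℝ, 0 ≤ a ∧ IntegrableOn (fun s => 1 / Real.sqrt (H s)) (Set.Ici a))
    (hpos : ∃ s₀ : ℝ, ∀ s : ℝ, s₀ ≤ s → 0 < h s) :
    ∃ a : ℝ, IntegrableOn (fun s => 1 / h s) (Set.Ici a) := by
  obtain ⟨a, -, hKOa⟩ := hKO
  obtain ⟨s₀, hs₀⟩ := hpos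
  set t := max s₀ 1
  have ht : 0 < t := lt_of_lt_of_le one_pos (le_max_right _ _)
  have hht : 0 < h t := hs₀ t (le_max_left _ _)
  set A := max a (2 * t)
  have hA {s : ℝ} (hs : s ∈ Ici A) : 2 * t ≤ s := (le_max_right _ _).trans hs
  have hmonoIcc (s : ℝ) : MonotoneOn h (Icc 0 s) := hmono.mono Icc_subset_Ici_self
  refine ⟨A, integrableOn_one_div_of_mul_le_sq (c := h t / (2 * t)) (by positivity)
    (hKOa.mono_set (Ici_subset_Ici.mpr (le_max_left _ _)))
    (hmono.mono fun s hs => by simp only [mem_Ici] at hs ⊢; linarith [hA hs])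
    (fun s hs => hs₀ s (by linarith [hA hs, le_max_left s₀ 1])) (fun s hs => ?_) (fun s hs => ?_)⟩
  · rw [hH]
    exact (hmonoIcc s).intervalIntegral_pos (hnonneg 0 le_rfl) ht.le (by linarith [hA hs]) hht
  · rw [hH]
    exact (hmonoIcc s).mul_intervalIntegral_le_sq (by linarith [hA hs]) (by positivity)
      (mul_le_of_superadditive hmono hsuper ht hht.le (hA hs))

/-- A continuous nondecreasing nonnegative super-additive function `h` satisfying the
Keller–Osserman condition `∫_a^∞ ds/√H(s) < ∞` (with `H(s) = ∫_0^s h`), and eventually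
positive, satisfies `∫_a^∞ ds/h(s) < ∞` for `a` large enough. -/
theorem keller_osserman_superadditive
    (h : ℝ → ℝ)
    (hcont : ContinuousOn h (Set.Ici 0))
    (hmono : MonotoneOn h (Set.Ici 0))
    (hnonneg : ∀ s : ℝ, 0 ≤ s → 0 ≤ h s)
    (hsuper : ∀ a b : ℝ, 0 ≤ a → 0 ≤ b → h a + h b ≤ h (a + b))
    (H : ℝ → ℝ) (hH : ∀ s : ℝ, H s = ∫ τ in (0 : ℝ)..s, h τ)
    (hKO : ∃ a : ℝ, 0 ≤ a ∧ IntegrableOn (fun s => 1 / Real.sqrt (H s)) (Set.Ici a))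
    (hpos : ∃ s₀ : ℝ, ∀ s : ℝ, s₀ ≤ s → 0 < h s) :
    ∃ a : ℝ, IntegrableOn (fun s => 1 / h s) (Set.Ici a) :=
  keller_osserman_superadditive_general h hmono hnonneg hsuper H hH hKO hpos
end

section
/- Let $q > 1$, $0 < \beta < 1$, and let $\overline u \ge \underline u > 0$ be two positive solutions of $\partial_t u - \Delta u + t^\alpha u^q = 0$ ($\alpha > -1$) in an open cylinder $Q$. Then $\tilde u := \underline u - \beta(\overline u - \underline u)$, wherever it is positive, is a supersolution: $\partial_t \tilde u - \Delta \tilde u + t^\alpha \tilde u^q \ge 0$ on $\{\tilde u > 0\} \cap Q$. -/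
/-! Since `∂ₜ` and `Δ` are linear, `ũ = (1 + β) u - β ū` satisfies
`∂ₜũ - Δũ = -t^α ((1 + β) u^q - β ū^q)`, and convexity of `r ↦ r^q` on `[0, ∞)`, applied to
`u = (ũ + β ū) / (1 + β)`, bounds `(1 + β) u^q - β ū^q` by `ũ^q` wherever `ũ ≥ 0`. -/

open Set

section Laplacian

variable {N : ℕ} {f g : EuclideanSpace ℝ (Fin N) → ℝ} {x : EuclideanSpace ℝ (Fin N)}

lemma lap_sub (hf : ContDiffAt ℝ 2 f x) (hg : ContDiffAt ℝ 2 g x) :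
    lap (fun y => f y - g y) x = lap f x - lap g x := by
  change lap (f - g) x = _
  simp only [lap, iteratedFDeriv_sub_apply hf hg, sub_apply, Finset.sum_sub_distrib]

lemma lap_const_mul (a : ℝ) (hf : ContDiffAt ℝ 2 f x) :
    lap (fun y => a * f y) x = a * lap f x := by
  simp only [lap, ← smul_eq_mul, iteratedFDeriv_const_smul_apply' hf,
    smul_apply, Finset.smul_sum]

end Laplacian

lemma ConvexOn.sub_le_of_extrapolation {E : Type*} [AddCommGroup E] [Module ℝ E] {s : Set E}
    {f : E → ℝ} (hf : ConvexOn ℝ s f) {x y : E} {β : ℝ} (hβ : 0 ≤ β) (hy : y ∈ s)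
    (hz : (1 + β) • x - β • y ∈ s) :
    (1 + β) * f x - β * f y ≤ f ((1 + β) • x - β • y) := by
  have hβ1 : 0 < 1 + β := by linarith
  have hx : (1 + β)⁻¹ • ((1 + β) • x - β • y) + (β / (1 + β)) • y = x := by
    rw [smul_sub, smul_smul, inv_mul_cancel₀ hβ1.ne', one_smul, smul_smul, div_eq_inv_mul,
      sub_add_cancel]
  have hconv := hf.2 hz hy (inv_nonneg.2 hβ1.le) (div_nonneg hβ hβ1.le)
    (by field_simp)
  rw [hx, smul_eq_mul, smul_eq_mul] at hconv
  have := mul_le_mul_of_nonneg_left hconv hβ1.le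
  rw [mul_add, ← mul_assoc, mul_inv_cancel₀ hβ1.ne', ← mul_assoc, mul_div_cancel₀ _ hβ1.ne'] at this
  linarith

lemma one_add_mul_rpow_sub_mul_rpow_le {q β a b : ℝ} (hq : 1 ≤ q) (hβ : 0 ≤ β) (hb : 0 ≤ b)
    (hab : 0 ≤ (1 + β) * a - β * b) :
    (1 + β) * a ^ q - β * b ^ q ≤ ((1 + β) * a - β * b) ^ q :=
  (convexOn_rpow hq).sub_le_of_extrapolation hβ hb hab

theorem convex_combination_supersolution_general
    (N : ℕ) (α q β : ℝ) (hq : 1 < q) (hβ0 : 0 < β)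
    (Q : Set (EuclideanSpace ℝ (Fin N) × ℝ))
    (hQt : ∀ p ∈ Q, 0 < p.2)
    (ubar u : EuclideanSpace ℝ (Fin N) → ℝ → ℝ)
    (hord : ∀ x t, (x, t) ∈ Q → 0 < u x t ∧ u x t ≤ ubar x t)
    (hsmooth : ∀ x t, (x, t) ∈ Q →
      (DifferentiableAt ℝ (u x) t ∧ ContDiffAt ℝ 2 (fun y => u y t) x) ∧
      (DifferentiableAt ℝ (ubar x) t ∧ ContDiffAt ℝ 2 (fun y => ubar y t) x))
    (hsolu : ∀ x t, (x, t) ∈ Q →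
      deriv (u x) t - lap (fun y => u y t) x + t ^ α * u x t ^ q = 0)
    (hsolubar : ∀ x t, (x, t) ∈ Q →
      deriv (ubar x) t - lap (fun y => ubar y t) x + t ^ α * ubar x t ^ q = 0) :
    ∀ x t, (x, t) ∈ Q → 0 < u x t - β * (ubar x t - u x t) →
      0 ≤ deriv (fun s => u x s - β * (ubar x s - u x s)) t
          - lap (fun y => u y t - β * (ubar y t - u y t)) x
          + t ^ α * (u x t - β * (ubar x t - u x t)) ^ q := by
  intro x t hxt hpos
  obtain ⟨⟨hut, hux⟩, hubart, hubarx⟩ := hsmooth x t hxt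
  have hderiv : deriv (fun s => u x s - β * (ubar x s - u x s)) t
      = deriv (u x) t - β * (deriv (ubar x) t - deriv (u x) t) :=
    (hut.hasDerivAt.sub ((hubart.hasDerivAt.sub hut.hasDerivAt).const_mul β)).deriv
  have hlap : lap (fun y => u y t - β * (ubar y t - u y t)) x
      = lap (fun y => u y t) x - β * (lap (fun y => ubar y t) x - lap (fun y => u y t) x) := by
    rw [lap_sub hux (contDiffAt_const.mul (hubarx.sub hux)), lap_const_mul β (hubarx.sub hux),
      lap_sub hubarx hux]
  have hubar_nonneg : 0 ≤ ubar x t := (hord x t hxt).1.le.trans (hord x t hxt).2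
  have hconv : (1 + β) * u x t ^ q - β * ubar x t ^ q ≤ (u x t - β * (ubar x t - u x t)) ^ q := by
    have := one_add_mul_rpow_sub_mul_rpow_le hq.le hβ0.le hubar_nonneg (a := u x t)
      (by linarith)
    rwa [show (1 + β) * u x t - β * ubar x t = u x t - β * (ubar x t - u x t) by ring] at this
  have htα : 0 ≤ t ^ α := Real.rpow_nonneg (hQt _ hxt).le α
  have hsolu' := eq_neg_of_add_eq_zero_left (hsolu x t hxt)
  have hsolubar' := eq_neg_of_add_eq_zero_left (hsolubar x t hxt)
  rw [hderiv, hlap]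
  calc 0 ≤ t ^ α * ((u x t - β * (ubar x t - u x t)) ^ q
          - ((1 + β) * u x t ^ q - β * ubar x t ^ q)) := mul_nonneg htα (sub_nonneg.2 hconv)
    _ = (1 + β) * (deriv (u x) t - lap (fun y => u y t) x)
          - β * (deriv (ubar x) t - lap (fun y => ubar y t) x)
          + t ^ α * (u x t - β * (ubar x t - u x t)) ^ q := by rw [hsolu', hsolubar']; ring
    _ = _ := by ring

/-- If `ū ≥ u > 0` are two solutions of `∂ₜu - Δu + t^α u^q = 0` in an open cylinder `Q` and
`0 < β < 1`, then `ũ = u - β(ū - u)` is a supersolution wherever it is positive. -/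
theorem convex_combination_supersolution
    (N : ℕ) (α q β : ℝ) (hα : -1 < α) (hq : 1 < q) (hβ0 : 0 < β) (hβ1 : β < 1)
    (Q : Set (EuclideanSpace ℝ (Fin N) × ℝ)) (hQo : IsOpen Q)
    (hQt : ∀ p ∈ Q, 0 < p.2)
    (ubar u : EuclideanSpace ℝ (Fin N) → ℝ → ℝ)
    (hord : ∀ x t, (x, t) ∈ Q → 0 < u x t ∧ u x t ≤ ubar x t)
    (hsmooth : ∀ x t, (x, t) ∈ Q →
      (DifferentiableAt ℝ (u x) t ∧ ContDiffAt ℝ 2 (fun y => u y t) x) ∧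
      (DifferentiableAt ℝ (ubar x) t ∧ ContDiffAt ℝ 2 (fun y => ubar y t) x))
    (hsolu : ∀ x t, (x, t) ∈ Q →
      deriv (u x) t - lap (fun y => u y t) x + t ^ α * u x t ^ q = 0)
    (hsolubar : ∀ x t, (x, t) ∈ Q →
      deriv (ubar x) t - lap (fun y => ubar y t) x + t ^ α * ubar x t ^ q = 0) :
    ∀ x t, (x, t) ∈ Q → 0 < u x t - β * (ubar x t - u x t) →
      0 ≤ deriv (fun s => u x s - β * (ubar x s - u x s)) t
          - lap (fun y => u y t - β * (ubar y t - u y t)) x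
          + t ^ α * (u x t - β * (ubar x t - u x t)) ^ q :=
  convex_combination_supersolution_general N α q β hq hβ0 Q hQt ubar u hord hsmooth hsolu hsolubar
end
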